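/- arXiv:1809.08746 — 2 statements merged into one kernel-verified Lean document; each statement's English description precedes it below -/
import Mathlib

section
/- The nuclear norm is decomposable with respect to orthogonally aligned subspaces: if B₁ ∈ M(U,V) and B₂ ∈ N(U,V), then ‖B₁ + B₂‖_* = ‖B₁‖_* + ‖B₂‖_*. -/
/-!
Orthogonal column spaces give `B₁ᵀ * B₂ = 0` and orthogonal row spaces give `B₁ * B₂ᵀ = 0`.
Hence the Gram matrix of `B₁ + B₂` is `S + T` with `S = B₁ᵀ * B₁`, `T = B₂ᵀ * B₂` and `S * T = 0`.
For positive semidefinite `S`, `T` this forces `√S * √T = 0`, so `(√S + √T)² = S + T` and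
`√(S + T) = √S + √T`. Taking traces gives the claim, because `‖B‖_* = tr √(Bᵀ * B)`.
-/

open Matrix

noncomputable def singVals {p q : ℕ} (A : Matrix (Fin p) (Fin q) ℝ) : Fin q → ℝ :=
  fun i => Real.sqrt ((show (Aᵀ * A).IsHermitian by
    simpa [Matrix.conjTranspose_eq_transpose_of_trivial] using
      Matrix.isHermitian_conjTranspose_mul_self A).eigenvalues i)

noncomputable def nuclearNorm {p q : ℕ} (A : Matrix (Fin p) (Fin q) ℝ) : ℝ :=
  ∑ i, singVals A i

/-- Column space of a matrix, as a subspace of Euclidean space. -/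
noncomputable def colSpace {p q : ℕ} (B : Matrix (Fin p) (Fin q) ℝ) :
    Submodule ℝ (EuclideanSpace ℝ (Fin p)) :=
  LinearMap.range (Matrix.toEuclideanLin B)

/-- Row space of a matrix, as a subspace of Euclidean space. -/
noncomputable def rowSpace {p q : ℕ} (B : Matrix (Fin p) (Fin q) ℝ) :
    Submodule ℝ (EuclideanSpace ℝ (Fin q)) :=
  LinearMap.range (Matrix.toEuclideanLin Bᵀ)

open scoped MatrixOrder ComplexOrder

namespace Matrix

section Sqrt

variable {n 𝕜 : Type*} [Fintype n] [DecidableEq n] [RCLike 𝕜]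

lemma IsHermitian.trace_cfc {A : Matrix n n 𝕜} (hA : A.IsHermitian) (f : ℝ → ℝ) :
    (cfc f A).trace = ∑ i, (f (hA.eigenvalues i) : 𝕜) := by
  rw [hA.cfc_eq, IsHermitian.cfc, Unitary.conjStarAlgAut_apply, trace_mul_cycle,
    UnitaryGroup.star_mul_self, one_mul, trace_diagonal]
  rfl

lemma conjTranspose_sqrt (S : Matrix n n 𝕜) : (CFC.sqrt S)ᴴ = CFC.sqrt S :=
  (CFC.sqrt_nonneg S).isSelfAdjoint

lemma sqrt_mul_sqrt_eq_zero {S T : Matrix n n 𝕜} (hS : 0 ≤ S) (hT : 0 ≤ T) (h : S * T = 0) :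
    CFC.sqrt S * CFC.sqrt T = 0 := by
  have hS' : S = (CFC.sqrt S)ᴴ * CFC.sqrt S := by
    rw [conjTranspose_sqrt, CFC.sqrt_mul_sqrt_self S]
  have hT' : T = CFC.sqrt T * (CFC.sqrt T)ᴴ := by
    rw [conjTranspose_sqrt, CFC.sqrt_mul_sqrt_self T]
  rwa [hS', conjTranspose_mul_self_mul_eq_zero, hT', mul_self_mul_conjTranspose_eq_zero] at h

lemma sqrt_add_of_mul_eq_zero {S T : Matrix n n 𝕜} (hS : 0 ≤ S) (hT : 0 ≤ T) (h : S * T = 0) :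
    CFC.sqrt (S + T) = CFC.sqrt S + CFC.sqrt T := by
  have hTS : T * S = 0 := by
    simpa only [star_mul, hS.isSelfAdjoint.star_eq, hT.isSelfAdjoint.star_eq, star_zero]
      using congr(star $h)
  refine CFC.sqrt_unique ?_ (add_nonneg (CFC.sqrt_nonneg S) (CFC.sqrt_nonneg T))
  rw [add_mul, mul_add, mul_add, sqrt_mul_sqrt_eq_zero hS hT h, sqrt_mul_sqrt_eq_zero hT hS hTS,
    CFC.sqrt_mul_sqrt_self S, CFC.sqrt_mul_sqrt_self T, add_zero, zero_add]

end Sqrt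

lemma transpose_mul_self_nonneg {m n : Type*} [Fintype m] [Fintype n] (A : Matrix m n ℝ) :
    0 ≤ Aᵀ * A := by
  simpa only [conjTranspose_eq_transpose_of_trivial] using
    (posSemidef_conjTranspose_mul_self A).nonneg

end Matrix

lemma nuclearNorm_eq_trace_sqrt {p q : ℕ} (A : Matrix (Fin p) (Fin q) ℝ) :
    nuclearNorm A = (CFC.sqrt (Aᵀ * A)).trace := by
  have hA := transpose_mul_self_nonneg A
  rw [CFC.sqrt_eq_real_sqrt _ hA, cfcₙ_eq_cfc, hA.isSelfAdjoint.isHermitian.trace_cfc]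
  rfl

lemma transpose_mul_eq_zero_of_isOrtho {m k l : ℕ} {C₁ : Matrix (Fin m) (Fin k) ℝ}
    {C₂ : Matrix (Fin m) (Fin l) ℝ} (h : colSpace C₁ ⟂ colSpace C₂) : C₁ᵀ * C₂ = 0 := by
  ext i j
  have := Submodule.isOrtho_iff_inner_eq.mp h
    _ (LinearMap.mem_range_self _ (EuclideanSpace.single i 1))
    _ (LinearMap.mem_range_self _ (EuclideanSpace.single j 1))
  simpa [EuclideanSpace.inner_eq_star_dotProduct, Matrix.mul_apply, dotProduct, mul_comm]
    using this

lemma nuclearNorm_add_of_transpose_mul_eq_zero {p q : ℕ} {B₁ B₂ : Matrix (Fin p) (Fin q) ℝ}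
    (hcol : B₁ᵀ * B₂ = 0) (hrow : B₁ * B₂ᵀ = 0) :
    nuclearNorm (B₁ + B₂) = nuclearNorm B₁ + nuclearNorm B₂ := by
  have hcol' : B₂ᵀ * B₁ = 0 := by
    simpa only [transpose_mul, transpose_transpose, transpose_zero] using congr($hcolᵀ)
  have hgram : (B₁ + B₂)ᵀ * (B₁ + B₂) = B₁ᵀ * B₁ + B₂ᵀ * B₂ := by
    rw [transpose_add, Matrix.add_mul, Matrix.mul_add, Matrix.mul_add, hcol, hcol', add_zero,
      zero_add]
  have hprod : B₁ᵀ * B₁ * (B₂ᵀ * B₂) = 0 := by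
    rw [Matrix.mul_assoc, ← Matrix.mul_assoc B₁, hrow, Matrix.zero_mul, Matrix.mul_zero]
  rw [nuclearNorm_eq_trace_sqrt, nuclearNorm_eq_trace_sqrt, nuclearNorm_eq_trace_sqrt, hgram,
    sqrt_add_of_mul_eq_zero (transpose_mul_self_nonneg B₁) (transpose_mul_self_nonneg B₂) hprod,
    trace_add]

/-- The nuclear norm is decomposable: if `B₁` has row space in `V` and column
space in `U`, while `B₂` has row space in `Vᗮ` and column space in `Uᗮ`, then
`‖B₁ + B₂‖_* = ‖B₁‖_* + ‖B₂‖_*`. -/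
theorem nuclearNorm_decomposable {p q : ℕ}
    (U : Submodule ℝ (EuclideanSpace ℝ (Fin p)))
    (V : Submodule ℝ (EuclideanSpace ℝ (Fin q)))
    (B₁ B₂ : Matrix (Fin p) (Fin q) ℝ)
    (h1row : rowSpace B₁ ≤ V) (h1col : colSpace B₁ ≤ U)
    (h2row : rowSpace B₂ ≤ Vᗮ) (h2col : colSpace B₂ ≤ Uᗮ) :
    nuclearNorm (B₁ + B₂) = nuclearNorm B₁ + nuclearNorm B₂ := by
  have hcol : B₁ᵀ * B₂ = 0 :=
    transpose_mul_eq_zero_of_isOrtho ((Submodule.isOrtho_orthogonal_right U).mono h1col h2col)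
  have hrow : B₁ᵀᵀ * B₂ᵀ = 0 :=
    transpose_mul_eq_zero_of_isOrtho ((Submodule.isOrtho_orthogonal_right V).mono h1row h2row)
  rw [transpose_transpose] at hrow
  exact nuclearNorm_add_of_transpose_mul_eq_zero hcol hrow
end

section
/- Singular value thresholding solves the nuclear-norm proximal problem: given B₀ ∈ ℝ^{p×q} with singular value decomposition B₀ = U diag(s) Vᵀ and ω ≥ 0, the matrix B̂ = U diag((sᵢ − ω)₊) Vᵀ minimizes (1/2)‖B − B₀‖_F² + ω‖B‖_* over all B ∈ ℝ^{p×q}. -/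
open Matrix

noncomputable def frobNorm {p q : ℕ} (A : Matrix (Fin p) (Fin q) ℝ) : ℝ :=
  Real.sqrt (∑ i, ∑ j, (A i j)^2)

/-!
`B̂` is the proximal point of `B₀` because `E = B₀ - B̂ = U diag(min(sᵢ, ω)) Vᵀ` is a subgradient
of `ω‖·‖_*` at `B̂`. The operator norm of `E` is at most `ω`, so `⟨B, E⟩ ≤ ω‖B‖_*` for every `B`
(expand the trace in the right singular vectors of `B` and use Cauchy–Schwarz), while
`⟨B̂, E⟩ = ω ∑ (sᵢ - ω)₊ ≥ ω‖B̂‖_*`. The last inequality holds for any `U diag(t) Vᵀ` with `t ≥ 0`: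
writing `‖A‖_* = ∑ⱼ ⟨uⱼ, A vⱼ⟩` with left and right singular vectors `uⱼ, vⱼ`, each `tᵢ` is
weighted by `∑ⱼ ⟨Uᵢ, uⱼ⟩⟨Vᵢ, vⱼ⟩ ≤ 1` by Cauchy–Schwarz and Bessel's inequality.
-/

section DotProduct

variable {m n ι : Type*}

lemma dotProduct_self_nonneg [Fintype n] (x : n → ℝ) : 0 ≤ x ⬝ᵥ x :=
  Fintype.sum_nonneg fun i => mul_self_nonneg (x i)

lemma dotProduct_le_sqrt_mul_sqrt [Fintype n] (x y : n → ℝ) :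
    x ⬝ᵥ y ≤ √(x ⬝ᵥ x) * √(y ⬝ᵥ y) := by
  simpa [dotProduct, sq] using Real.sum_mul_le_sqrt_mul_sqrt Finset.univ x y

lemma mulVec_dotProduct_mulVec_of_transpose_mul_self [Fintype m] [Fintype n] [DecidableEq n]
    {R : Type*} [CommSemiring R] {U : Matrix m n R} (hU : Uᵀ * U = 1) (x y : n → R) :
    (U *ᵥ x) ⬝ᵥ (U *ᵥ y) = x ⬝ᵥ y := by
  rw [dotProduct_mulVec, ← mulVec_transpose, mulVec_mulVec, hU, one_mulVec]

lemma pairwise_transpose_dotProduct_eq_zero [Fintype m] [DecidableEq ι] {U : Matrix m ι ℝ}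
    (hU : Uᵀ * U = 1) : Pairwise fun i j => Uᵀ i ⬝ᵥ Uᵀ j = 0 := fun i j hij =>
  (congr_fun (congr_fun hU i) j).trans (one_apply_ne hij)

lemma transpose_dotProduct_self [Fintype m] [DecidableEq ι] {U : Matrix m ι ℝ}
    (hU : Uᵀ * U = 1) (i : ι) : Uᵀ i ⬝ᵥ Uᵀ i = 1 :=
  (congr_fun (congr_fun hU i) i).trans (one_apply_eq i)

/-- Bessel's inequality. -/
lemma sum_sq_dotProduct_le [Fintype n] [Fintype ι] {u : ι → n → ℝ}
    (horth : Pairwise fun i j => u i ⬝ᵥ u j = 0) (hnorm : ∀ i, u i ⬝ᵥ u i ≤ 1) (x : n → ℝ) :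
    ∑ i, (x ⬝ᵥ u i) ^ 2 ≤ x ⬝ᵥ x := by
  set y := ∑ i, (x ⬝ᵥ u i) • u i
  have hxy : x ⬝ᵥ y = ∑ i, (x ⬝ᵥ u i) ^ 2 := by
    simp only [y, dotProduct_sum, dotProduct_smul, smul_eq_mul, sq]
  have hyy : y ⬝ᵥ y ≤ ∑ i, (x ⬝ᵥ u i) ^ 2 := by
    have hu : ∀ i, u i ⬝ᵥ y = (x ⬝ᵥ u i) * (u i ⬝ᵥ u i) := fun i => by
      rw [dotProduct_sum, Finset.sum_eq_single i (fun j _ hji => by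
        rw [dotProduct_smul, horth hji.symm, smul_zero]) (by simp), dotProduct_smul, smul_eq_mul]
    rw [sum_dotProduct]
    refine Finset.sum_le_sum fun i _ => ?_
    rw [smul_dotProduct, hu, smul_eq_mul, ← mul_assoc, ← sq]
    exact mul_le_of_le_one_right (sq_nonneg _) (hnorm i)
  have := dotProduct_self_nonneg (x - y)
  rw [sub_dotProduct, dotProduct_sub, dotProduct_sub, dotProduct_comm y x, hxy] at this
  linarith

lemma sum_dotProduct_mul_dotProduct_le [Fintype m] [Fintype n] [Fintype ι]
    {u : ι → m → ℝ} {v : ι → n → ℝ}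
    (hu_orth : Pairwise fun i j => u i ⬝ᵥ u j = 0) (hu_norm : ∀ i, u i ⬝ᵥ u i ≤ 1)
    (hv_orth : Pairwise fun i j => v i ⬝ᵥ v j = 0) (hv_norm : ∀ i, v i ⬝ᵥ v i ≤ 1)
    (x : m → ℝ) (y : n → ℝ) :
    ∑ i, (x ⬝ᵥ u i) * (y ⬝ᵥ v i) ≤ √(x ⬝ᵥ x) * √(y ⬝ᵥ y) :=
  (Real.sum_mul_le_sqrt_mul_sqrt _ _ _).trans <| mul_le_mul
    (Real.sqrt_le_sqrt (sum_sq_dotProduct_le hu_orth hu_norm x))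
    (Real.sqrt_le_sqrt (sum_sq_dotProduct_le hv_orth hv_norm y))
    (Real.sqrt_nonneg _) (Real.sqrt_nonneg _)

end DotProduct

section Orthogonal

variable {m n ι : Type*} [Fintype m] [Fintype n] [Fintype ι]

lemma trace_transpose_mul_eq_sum_of_mul_transpose_self [DecidableEq n] {Q : Matrix n ι ℝ}
    (hQ : Q * Qᵀ = 1) (X Y : Matrix m n ℝ) :
    trace (Xᵀ * Y) = ∑ j, (X *ᵥ Qᵀ j) ⬝ᵥ (Y *ᵥ Qᵀ j) :=
  calc trace (Xᵀ * Y) = trace ((X * Q)ᵀ * (Y * Q)) := by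
        rw [transpose_mul, Matrix.mul_assoc, trace_mul_comm Qᵀ, Matrix.mul_assoc, Matrix.mul_assoc,
          hQ, Matrix.mul_one]
    _ = ∑ j, (X *ᵥ Qᵀ j) ⬝ᵥ (Y *ᵥ Qᵀ j) := rfl

variable [DecidableEq ι] {U : Matrix m ι ℝ} {V : Matrix n ι ℝ}

lemma mulVec_dotProduct_self_le (hU : Uᵀ * U = 1) (hV : Vᵀ * V = 1) {d : ι → ℝ} {c : ℝ}
    (hc : 0 ≤ c) (hd : ∀ i, d i ^ 2 ≤ c) (x : n → ℝ) :
    ((U * diagonal d * Vᵀ) *ᵥ x) ⬝ᵥ ((U * diagonal d * Vᵀ) *ᵥ x) ≤ c * (x ⬝ᵥ x) := by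
  set b := Vᵀ *ᵥ x
  have hb : b ⬝ᵥ b ≤ x ⬝ᵥ x :=
    calc b ⬝ᵥ b = ∑ i, (x ⬝ᵥ Vᵀ i) ^ 2 := by simp only [dotProduct_comm x, sq]; rfl
      _ ≤ x ⬝ᵥ x := sum_sq_dotProduct_le (pairwise_transpose_dotProduct_eq_zero hV)
        (fun i => (transpose_dotProduct_self hV i).le) x
  calc ((U * diagonal d * Vᵀ) *ᵥ x) ⬝ᵥ ((U * diagonal d * Vᵀ) *ᵥ x)
      = ∑ i, d i ^ 2 * b i ^ 2 := by
        rw [← mulVec_mulVec, ← mulVec_mulVec, mulVec_dotProduct_mulVec_of_transpose_mul_self hU]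
        exact Finset.sum_congr rfl fun i _ => by rw [mulVec_diagonal]; ring
    _ ≤ ∑ i, c * b i ^ 2 := by gcongr with i; exact hd i
    _ = c * (b ⬝ᵥ b) := by simp only [← Finset.mul_sum, dotProduct, sq]
    _ ≤ c * (x ⬝ᵥ x) := mul_le_mul_of_nonneg_left hb hc

lemma trace_transpose_mul_diagonal_eq_sum (hU : Uᵀ * U = 1) (hV : Vᵀ * V = 1) (a b : ι → ℝ) :
    trace ((U * diagonal a * Vᵀ)ᵀ * (U * diagonal b * Vᵀ)) = ∑ i, a i * b i := by
  have : (U * diagonal a * Vᵀ)ᵀ * (U * diagonal b * Vᵀ) = V * diagonal (a * b) * Vᵀ := by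
    simp only [transpose_mul, transpose_transpose, diagonal_transpose, Matrix.mul_assoc]
    rw [← Matrix.mul_assoc Uᵀ, hU, Matrix.one_mul, ← Matrix.mul_assoc (diagonal a),
      diagonal_mul_diagonal]
    rfl
  rw [this, trace_mul_comm, ← Matrix.mul_assoc, hV, Matrix.one_mul, trace_diagonal]
  rfl

lemma sum_dotProduct_mulVec_diagonal_le {κ : Type*} [Fintype κ]
    {u : κ → m → ℝ} {v : κ → n → ℝ}
    (hu_orth : Pairwise fun i j => u i ⬝ᵥ u j = 0) (hu_norm : ∀ i, u i ⬝ᵥ u i ≤ 1)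
    (hv_orth : Pairwise fun i j => v i ⬝ᵥ v j = 0) (hv_norm : ∀ i, v i ⬝ᵥ v i ≤ 1)
    (hU : Uᵀ * U = 1) (hV : Vᵀ * V = 1) {t : ι → ℝ} (ht : ∀ i, 0 ≤ t i) :
    ∑ j, u j ⬝ᵥ ((U * diagonal t * Vᵀ) *ᵥ v j) ≤ ∑ i, t i := by
  have hterm : ∀ j, u j ⬝ᵥ ((U * diagonal t * Vᵀ) *ᵥ v j) =
      ∑ i, t i * ((Uᵀ i ⬝ᵥ u j) * (Vᵀ i ⬝ᵥ v j)) := fun j => by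
    rw [← mulVec_mulVec, ← mulVec_mulVec, dotProduct_mulVec, ← mulVec_transpose]
    refine Finset.sum_congr rfl fun i _ => ?_
    rw [mulVec_diagonal]
    simp only [mulVec]
    ring
  calc ∑ j, u j ⬝ᵥ ((U * diagonal t * Vᵀ) *ᵥ v j)
      = ∑ i, t i * ∑ j, (Uᵀ i ⬝ᵥ u j) * (Vᵀ i ⬝ᵥ v j) := by
        simp only [hterm, Finset.mul_sum]; exact Finset.sum_comm
    _ ≤ ∑ i, t i * 1 := by
        gcongr with i
        · exact ht i
        calc _ ≤ √(Uᵀ i ⬝ᵥ Uᵀ i) * √(Vᵀ i ⬝ᵥ Vᵀ i) :=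
              sum_dotProduct_mul_dotProduct_le hu_orth hu_norm hv_orth hv_norm _ _
          _ = 1 := by
              rw [transpose_dotProduct_self hU, transpose_dotProduct_self hV, Real.sqrt_one,
                mul_one]
    _ = ∑ i, t i := by simp only [mul_one]

end Orthogonal

section SingularVectors

variable {p q : ℕ}

lemma posSemidef_transpose_mul_self {m n : Type*} [Fintype m] [Fintype n] (A : Matrix m n ℝ) :
    (Aᵀ * A).PosSemidef := by
  simpa [conjTranspose_eq_transpose_of_trivial] using posSemidef_conjTranspose_mul_self A

/-- Its columns `(rightSingularMatrix A)ᵀ j` form the orthonormal eigenbasis of `Aᵀ A` from which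
`singVals A` is computed. -/
noncomputable def rightSingularMatrix (A : Matrix (Fin p) (Fin q) ℝ) : Matrix (Fin q) (Fin q) ℝ :=
  (posSemidef_transpose_mul_self A).isHermitian.eigenvectorUnitary

lemma rightSingularMatrix_mul_transpose (A : Matrix (Fin p) (Fin q) ℝ) :
    rightSingularMatrix A * (rightSingularMatrix A)ᵀ = 1 := by
  have h :=
    mem_unitaryGroup_iff.mp (posSemidef_transpose_mul_self A).isHermitian.eigenvectorUnitary.2
  rwa [star_eq_conjTranspose, conjTranspose_eq_transpose_of_trivial] at h

lemma rightSingularMatrix_transpose_mul (A : Matrix (Fin p) (Fin q) ℝ) :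
    (rightSingularMatrix A)ᵀ * rightSingularMatrix A = 1 := by
  have h :=
    mem_unitaryGroup_iff'.mp (posSemidef_transpose_mul_self A).isHermitian.eigenvectorUnitary.2
  rwa [star_eq_conjTranspose, conjTranspose_eq_transpose_of_trivial] at h

lemma singVals_nonneg (A : Matrix (Fin p) (Fin q) ℝ) (j : Fin q) : 0 ≤ singVals A j :=
  Real.sqrt_nonneg _

lemma mulVec_rightSingularMatrix_dotProduct (A : Matrix (Fin p) (Fin q) ℝ) (i j : Fin q) :
    (A *ᵥ (rightSingularMatrix A)ᵀ i) ⬝ᵥ (A *ᵥ (rightSingularMatrix A)ᵀ j) =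
      if i = j then singVals A i ^ 2 else 0 := by
  set Q := rightSingularMatrix A
  have hA := posSemidef_transpose_mul_self A
  have heig : (Aᵀ * A) *ᵥ Qᵀ j = hA.isHermitian.eigenvalues j • Qᵀ j :=
    hA.isHermitian.mulVec_eigenvectorBasis j
  have hsq : singVals A j ^ 2 = hA.isHermitian.eigenvalues j :=
    Real.sq_sqrt (hA.eigenvalues_nonneg j)
  calc (A *ᵥ Qᵀ i) ⬝ᵥ (A *ᵥ Qᵀ j) = Qᵀ i ⬝ᵥ ((Aᵀ * A) *ᵥ Qᵀ j) := by
        rw [← mulVec_mulVec, dotProduct_mulVec (Qᵀ i) Aᵀ, vecMul_transpose]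
    _ = singVals A j ^ 2 * (Qᵀ * Q) i j := by rw [heig, dotProduct_smul, hsq]; rfl
    _ = if i = j then singVals A i ^ 2 else 0 := by
        rw [rightSingularMatrix_transpose_mul, one_apply]
        split_ifs with h <;> simp [h]

lemma sqrt_mulVec_rightSingularMatrix_dotProduct_self (A : Matrix (Fin p) (Fin q) ℝ)
    (j : Fin q) :
    √((A *ᵥ (rightSingularMatrix A)ᵀ j) ⬝ᵥ (A *ᵥ (rightSingularMatrix A)ᵀ j)) = singVals A j := by
  rw [mulVec_rightSingularMatrix_dotProduct, if_pos rfl, Real.sqrt_sq (singVals_nonneg A j)]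

/-- This is the zero vector when `singVals A j = 0`, since `0⁻¹ = 0`. -/
noncomputable def leftSingularVector (A : Matrix (Fin p) (Fin q) ℝ) (j : Fin q) : Fin p → ℝ :=
  (singVals A j)⁻¹ • (A *ᵥ (rightSingularMatrix A)ᵀ j)

lemma pairwise_leftSingularVector_dotProduct_eq_zero (A : Matrix (Fin p) (Fin q) ℝ) :
    Pairwise fun i j => leftSingularVector A i ⬝ᵥ leftSingularVector A j = 0 := fun i j hij => by
  simp [leftSingularVector, mulVec_rightSingularMatrix_dotProduct, hij]

lemma leftSingularVector_dotProduct_self_le_one (A : Matrix (Fin p) (Fin q) ℝ) (j : Fin q) :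
    leftSingularVector A j ⬝ᵥ leftSingularVector A j ≤ 1 := by
  simp only [leftSingularVector, smul_dotProduct, dotProduct_smul, smul_eq_mul,
    mulVec_rightSingularMatrix_dotProduct, ↓reduceIte]
  rcases eq_or_ne (singVals A j) 0 with h | h
  · simp [h]
  · field_simp; rfl

lemma leftSingularVector_dotProduct_mulVec (A : Matrix (Fin p) (Fin q) ℝ) (j : Fin q) :
    leftSingularVector A j ⬝ᵥ (A *ᵥ (rightSingularMatrix A)ᵀ j) = singVals A j := by
  simp only [leftSingularVector, smul_dotProduct, smul_eq_mul,
    mulVec_rightSingularMatrix_dotProduct, ↓reduceIte]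
  rcases eq_or_ne (singVals A j) 0 with h | h
  · simp [h]
  · field_simp

end SingularVectors

section NuclearNorm

variable {p q k : ℕ}

lemma nuclearNorm_eq_sum_leftSingularVector_dotProduct (A : Matrix (Fin p) (Fin q) ℝ) :
    nuclearNorm A = ∑ j, leftSingularVector A j ⬝ᵥ (A *ᵥ (rightSingularMatrix A)ᵀ j) := by
  simp only [nuclearNorm, leftSingularVector_dotProduct_mulVec]

theorem trace_transpose_mul_le_mul_nuclearNorm {ω : ℝ} (hω : 0 ≤ ω)
    {W : Matrix (Fin p) (Fin q) ℝ} (hW : ∀ x, (W *ᵥ x) ⬝ᵥ (W *ᵥ x) ≤ ω ^ 2 * (x ⬝ᵥ x))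
    (B : Matrix (Fin p) (Fin q) ℝ) :
    trace (Bᵀ * W) ≤ ω * nuclearNorm B := by
  set Q := rightSingularMatrix B
  rw [trace_transpose_mul_eq_sum_of_mul_transpose_self (rightSingularMatrix_mul_transpose B),
    nuclearNorm, Finset.mul_sum]
  refine Finset.sum_le_sum fun j _ => ?_
  have hWj : √((W *ᵥ Qᵀ j) ⬝ᵥ (W *ᵥ Qᵀ j)) ≤ ω :=
    calc _ ≤ √(ω ^ 2 * (Qᵀ j ⬝ᵥ Qᵀ j)) := Real.sqrt_le_sqrt (hW _)
      _ = ω := by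
        rw [transpose_dotProduct_self (rightSingularMatrix_transpose_mul B), mul_one,
          Real.sqrt_sq hω]
  calc (B *ᵥ Qᵀ j) ⬝ᵥ (W *ᵥ Qᵀ j)
      ≤ √((B *ᵥ Qᵀ j) ⬝ᵥ (B *ᵥ Qᵀ j)) * √((W *ᵥ Qᵀ j) ⬝ᵥ (W *ᵥ Qᵀ j)) :=
        dotProduct_le_sqrt_mul_sqrt _ _
    _ ≤ singVals B j * ω := by
        rw [sqrt_mulVec_rightSingularMatrix_dotProduct_self]
        exact mul_le_mul_of_nonneg_left hWj (singVals_nonneg B j)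
    _ = ω * singVals B j := mul_comm _ _

theorem nuclearNorm_mul_diagonal_mul_transpose_le {U : Matrix (Fin p) (Fin k) ℝ}
    {V : Matrix (Fin q) (Fin k) ℝ} (hU : Uᵀ * U = 1) (hV : Vᵀ * V = 1) {t : Fin k → ℝ}
    (ht : ∀ i, 0 ≤ t i) :
    nuclearNorm (U * diagonal t * Vᵀ) ≤ ∑ i, t i := by
  set A := U * diagonal t * Vᵀ
  rw [nuclearNorm_eq_sum_leftSingularVector_dotProduct]
  exact sum_dotProduct_mulVec_diagonal_le (pairwise_leftSingularVector_dotProduct_eq_zero A)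
    (leftSingularVector_dotProduct_self_le_one A)
    (pairwise_transpose_dotProduct_eq_zero (rightSingularMatrix_transpose_mul A))
    (fun j => (transpose_dotProduct_self (rightSingularMatrix_transpose_mul A) j).le) hU hV ht

end NuclearNorm

section Frobenius

variable {p q : ℕ}

lemma frobNorm_sq (X : Matrix (Fin p) (Fin q) ℝ) : frobNorm X ^ 2 = trace (Xᵀ * X) := by
  rw [frobNorm, Real.sq_sqrt (by positivity)]
  simp only [trace, diag, mul_apply, transpose_apply, sq]
  exact Finset.sum_comm

/-- `hle` and `hge` make `B₀ - Bhat` a subgradient of `N` at `Bhat`. -/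
lemma half_frobNorm_sq_add_le_of_subgradient (N : Matrix (Fin p) (Fin q) ℝ → ℝ)
    {B₀ Bhat : Matrix (Fin p) (Fin q) ℝ} (hle : ∀ B, trace (Bᵀ * (B₀ - Bhat)) ≤ N B)
    (hge : N Bhat ≤ trace (Bhatᵀ * (B₀ - Bhat))) (B : Matrix (Fin p) (Fin q) ℝ) :
    1 / 2 * frobNorm (Bhat - B₀) ^ 2 + N Bhat ≤ 1 / 2 * frobNorm (B - B₀) ^ 2 + N B := by
  set E := B₀ - Bhat
  set X := B - Bhat
  have hX : 0 ≤ trace (Xᵀ * X) := frobNorm_sq X ▸ sq_nonneg _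
  have hXE : trace (Xᵀ * E) = trace (Bᵀ * E) - trace (Bhatᵀ * E) := by
    rw [transpose_sub, Matrix.sub_mul, trace_sub]
  have hEX : trace (Eᵀ * X) = trace (Xᵀ * E) := by
    rw [← trace_transpose, transpose_mul, transpose_transpose]
  have hB : B - B₀ = X - E := by simp only [X, E]; abel
  have hBhat : Bhat - B₀ = -E := (neg_sub _ _).symm
  rw [frobNorm_sq, frobNorm_sq, hB, hBhat]
  simp only [transpose_sub, transpose_neg, Matrix.sub_mul, Matrix.mul_sub, Matrix.neg_mul,
    Matrix.mul_neg, neg_neg, trace_sub]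
  linarith [hle B]

end Frobenius

/-- Singular value thresholding: if `B₀ = U diag(s) Vᵀ` is a singular value
decomposition (orthonormal columns of `U` and `V`, nonnegative `s`), then
`B̂ = U diag((sᵢ − ω)₊) Vᵀ` minimizes `(1/2)‖B − B₀‖_F² + ω‖B‖_*`. -/
theorem svd_thresholding_minimizes {p q k : ℕ} (ω : ℝ) (hω : 0 ≤ ω)
    (U : Matrix (Fin p) (Fin k) ℝ) (V : Matrix (Fin q) (Fin k) ℝ)
    (s : Fin k → ℝ) (hs : ∀ i, 0 ≤ s i)
    (hU : Uᵀ * U = 1) (hV : Vᵀ * V = 1)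
    (B₀ : Matrix (Fin p) (Fin q) ℝ)
    (hB₀ : B₀ = U * Matrix.diagonal s * Vᵀ)
    (Bhat : Matrix (Fin p) (Fin q) ℝ)
    (hBhat : Bhat = U * Matrix.diagonal (fun i => max (s i - ω) 0) * Vᵀ) :
    ∀ B : Matrix (Fin p) (Fin q) ℝ,
      (1/2) * (frobNorm (Bhat - B₀))^2 + ω * nuclearNorm Bhat ≤
      (1/2) * (frobNorm (B - B₀))^2 + ω * nuclearNorm B := by
  intro B
  have hE : B₀ - Bhat = U * diagonal (fun i => min (s i) ω) * Vᵀ := by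
    rw [hB₀, hBhat, ← Matrix.sub_mul, ← Matrix.mul_sub, diagonal_sub]
    congr
    funext i
    grind
  refine half_frobNorm_sq_add_le_of_subgradient (fun B => ω * nuclearNorm B) (fun B => ?_) ?_ B
  · rw [hE]
    refine trace_transpose_mul_le_mul_nuclearNorm hω
      (mulVec_dotProduct_self_le hU hV (sq_nonneg ω) fun i => ?_) B
    exact pow_le_pow_left₀ (le_min (hs i) hω) (min_le_right _ _) 2
  · rw [hE, hBhat, trace_transpose_mul_diagonal_eq_sum hU hV]
    calc ω * nuclearNorm _ ≤ ω * ∑ i, max (s i - ω) 0 := mul_le_mul_of_nonneg_left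
          (nuclearNorm_mul_diagonal_mul_transpose_le hU hV fun i => le_max_right _ _) hω
      _ = ∑ i, max (s i - ω) 0 * min (s i) ω := by
          rw [Finset.mul_sum]
          exact Finset.sum_congr rfl fun i _ => by grind
end
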